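/- With the bracket [d_m, d_n] = [m−n]·d_{m+n} + δ_{m+n,0}·γ_m·c, [d_m, c] = [c, d_m] = [c, c] = 0, extended bilinearly to V, and with the linear map Γ : V → V given by Γ(d_p) = ⟨p⟩·d_p and Γ(c) = c, the twisted Jacobi identity [[d_m, d_n], Γ(d_p)] + [[d_n, d_p], Γ(d_m)] + [[d_p, d_m], Γ(d_n)] = 0 holds for all integers m, n, p. -/

import Mathlib

/-- The q-integer `[m] = (q^m - q^(-m))/(q - q⁻¹)`, for real `q`. -/
noncomputable def qInt (q : ℝ) (m : ℤ) : ℝ := (q ^ m - q ^ (-m)) / (q - q⁻¹)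

/-- `⟨m⟩ = q^m + q^(-m)`, for real `q`. -/
noncomputable def qBra (q : ℝ) (m : ℤ) : ℝ := q ^ m + q ^ (-m)

/-- `γ_m = [m+1][m][m−1]/([2][3]⟨m⟩)`. -/
noncomputable def qGamma (q : ℝ) (m : ℤ) : ℝ :=
  qInt q (m + 1) * qInt q m * qInt q (m - 1) / (qInt q 2 * qInt q 3 * qBra q m)

/-- The free real vector space with basis `{d_m : m ∈ ℤ} ∪ {c}`, realized as finitely
supported functions on `Option ℤ`. -/
abbrev V : Type := Option ℤ →₀ ℝ

/-- The basis vector `d_m`. -/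
noncomputable def d (m : ℤ) : V := Finsupp.single (some m) 1

/-- The central basis vector `c`. -/
noncomputable def c : V := Finsupp.single none 1

/-- The bracket on basis vectors: `[d_m, d_n] = [m−n]·d_{m+n} + δ_{m+n,0}·γ_m·c`,
and `[d_m, c] = [c, d_m] = [c, c] = 0`. -/
noncomputable def bracketBasis (q : ℝ) : Option ℤ → Option ℤ → V
  | some m, some n =>
      qInt q (m - n) • d (m + n) + (if m + n = 0 then qGamma q m else 0) • c
  | _, _ => 0

/-- The bracket, extended bilinearly to `V`. -/
noncomputable def B (q : ℝ) (x y : V) : V :=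
  x.sum fun i a => y.sum fun j b => (a * b) • bracketBasis q i j

/-- The twist `Γ : V → V`, the linear map with `Γ(d_p) = ⟨p⟩·d_p` and `Γ(c) = c`. -/
noncomputable def Gam (q : ℝ) (x : V) : V :=
  x.sum fun i a =>
    match i with
    | some p => Finsupp.single (some p) (qBra q p * a)
    | none => Finsupp.single none a

/-!
Because `c` is central and `Γ` is diagonal, the term `[[d_m, d_n], Γ(d_p)]` equals
`[m−n]⟨p⟩ [d_{m+n}, d_p]`. The cyclic sum of the `d_{m+n+p}`-coefficients
`[m−n]⟨p⟩[m+n−p]` vanishes identically in `q`. The `c`-coefficients only appear when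
`m + n + p = 0`; then `⟨p⟩ = ⟨m+n⟩` cancels the `⟨m+n⟩` in the denominator of `γ_{m+n}`, and what
remains is the cyclic sum of `[m−n][m+n+1][m+n][m+n−1]`, which vanishes as well.
-/

section QIdentities

variable {q : ℝ}

lemma qBra_pos (hq : 0 < q) (k : ℤ) : 0 < qBra q k :=
  add_pos (zpow_pos hq _) (zpow_pos hq _)

lemma qBra_neg (k : ℤ) : qBra q (-k) = qBra q k := by
  rw [qBra, qBra, neg_neg, add_comm]

lemma qBra_mul_qGamma {k : ℤ} (hk : qBra q k ≠ 0) :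
    qBra q k * qGamma q k = qInt q (k + 1) * qInt q k * qInt q (k - 1) / (qInt q 2 * qInt q 3) := by
  rw [qGamma, mul_div_assoc', mul_comm, mul_div_mul_right _ _ hk]

lemma qInt_mul_qBra_mul_qInt_cyclic (hq : q ≠ 0) (m n p : ℤ) :
    qInt q (m - n) * qBra q p * qInt q (m + n - p) + qInt q (n - p) * qBra q m * qInt q (n + p - m)
      + qInt q (p - m) * qBra q n * qInt q (p + m - n) = 0 := by
  have := zpow_ne_zero m hq
  have := zpow_ne_zero n hq
  have := zpow_ne_zero p hq
  simp only [qInt, qBra, div_eq_mul_inv]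
  -- `(q - q⁻¹)⁻¹` is a common factor of every term, so it need not be nonzero.
  generalize (q - q⁻¹)⁻¹ = u
  simp only [zpow_sub₀ hq, zpow_add₀ hq, zpow_neg]
  field_simp
  ring

lemma qInt_cubic_cyclic (hq : q ≠ 0) {m n p : ℤ} (hmnp : m + n + p = 0) :
    qInt q (m - n) * (qInt q (m + n + 1) * qInt q (m + n) * qInt q (m + n - 1))
      + qInt q (n - p) * (qInt q (n + p + 1) * qInt q (n + p) * qInt q (n + p - 1))
      + qInt q (p - m) * (qInt q (p + m + 1) * qInt q (p + m) * qInt q (p + m - 1)) = 0 := by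
  obtain rfl : p = -(m + n) := by omega
  have := zpow_ne_zero m hq
  have := zpow_ne_zero n hq
  simp only [qInt, div_eq_mul_inv]
  generalize (q - q⁻¹)⁻¹ = u
  simp only [zpow_sub₀ hq, zpow_add₀ hq, zpow_neg, zpow_one]
  field_simp
  ring

lemma qInt_mul_qBra_mul_qGamma_cyclic (hq : 0 < q) {m n p : ℤ} (hmnp : m + n + p = 0) :
    qInt q (m - n) * qBra q p * qGamma q (m + n) + qInt q (n - p) * qBra q m * qGamma q (n + p)
      + qInt q (p - m) * qBra q n * qGamma q (p + m) = 0 := by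
  have hp : qBra q p = qBra q (m + n) := by rw [← qBra_neg, show -p = m + n by omega]
  have hm : qBra q m = qBra q (n + p) := by rw [← qBra_neg, show -m = n + p by omega]
  have hn : qBra q n = qBra q (p + m) := by rw [← qBra_neg, show -n = p + m by omega]
  simp only [hp, hm, hn, mul_assoc, qBra_mul_qGamma (qBra_pos hq _).ne']
  linear_combination (qInt q 2 * qInt q 3)⁻¹ * qInt_cubic_cyclic hq.ne' hmnp

end QIdentities

section Bracket

variable (q : ℝ)

lemma B_add_left (x y z : V) : B q (x + y) z = B q x z + B q y z := by
  unfold B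
  refine Finsupp.sum_add_index' (fun _ => by simp) fun _ _ _ => ?_
  simp only [add_mul, add_smul, Finsupp.sum_add]

lemma B_smul_left (a : ℝ) (x y : V) : B q (a • x) y = a • B q x y := by
  unfold B
  rw [Finsupp.sum_smul_index' (by simp), Finsupp.smul_sum]
  simp only [Finsupp.smul_sum, smul_smul, smul_eq_mul, mul_assoc]

lemma B_smul_right (a : ℝ) (x y : V) : B q x (a • y) = a • B q x y := by
  unfold B
  rw [Finsupp.smul_sum]
  refine Finsupp.sum_congr fun _ _ => ?_
  rw [Finsupp.sum_smul_index' (by simp), Finsupp.smul_sum]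
  simp only [smul_smul, smul_eq_mul, mul_left_comm]

lemma B_c_left (y : V) : B q c y = 0 := by
  unfold B c
  rw [Finsupp.sum_single_index] <;> simp [bracketBasis]

lemma B_d_d (m n : ℤ) :
    B q (d m) (d n) = qInt q (m - n) • d (m + n) + (if m + n = 0 then qGamma q m else 0) • c := by
  unfold B d
  rw [Finsupp.sum_single_index, Finsupp.sum_single_index] <;> simp [bracketBasis, d]

lemma Gam_d (p : ℤ) : Gam q (d p) = qBra q p • d p := by
  unfold Gam d
  rw [Finsupp.sum_single_index] <;> simp

lemma B_B_Gam_d (m n p : ℤ) :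
    B q (B q (d m) (d n)) (Gam q (d p)) = (qInt q (m - n) * qBra q p) • B q (d (m + n)) (d p) := by
  rw [B_d_d, Gam_d, B_add_left, B_smul_left, B_smul_left, B_c_left, smul_zero, add_zero,
    B_smul_right, smul_smul]

end Bracket

theorem twisted_jacobi_general (q : ℝ) (hq : 0 < q) (m n p : ℤ) :
    B q (B q (d m) (d n)) (Gam q (d p))
      + B q (B q (d n) (d p)) (Gam q (d m))
      + B q (B q (d p) (d m)) (Gam q (d n)) = 0 := by
  rw [B_B_Gam_d, B_B_Gam_d, B_B_Gam_d]
  simp only [B_d_d, smul_add, smul_smul]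
  rw [show n + p + m = m + n + p by ring, show p + m + n = m + n + p by ring]
  have central : qInt q (m - n) * qBra q p * (if m + n + p = 0 then qGamma q (m + n) else 0)
      + qInt q (n - p) * qBra q m * (if m + n + p = 0 then qGamma q (n + p) else 0)
      + qInt q (p - m) * qBra q n * (if m + n + p = 0 then qGamma q (p + m) else 0) = 0 := by
    split_ifs with hmnp
    · exact qInt_mul_qBra_mul_qGamma_cyclic hq hmnp
    · ring
  linear_combination (norm := module)
    qInt_mul_qBra_mul_qInt_cyclic hq.ne' m n p • d (m + n + p) + central • c

/-- Twisted Jacobi identity: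
`[[d_m, d_n], Γ(d_p)] + [[d_n, d_p], Γ(d_m)] + [[d_p, d_m], Γ(d_n)] = 0`. -/
theorem twisted_jacobi (q : ℝ) (hq : 0 < q) (hq1 : q ≠ 1) (m n p : ℤ) :
    B q (B q (d m) (d n)) (Gam q (d p))
      + B q (B q (d n) (d p)) (Gam q (d m))
      + B q (B q (d p) (d m)) (Gam q (d n)) = 0 :=
  twisted_jacobi_general q hq m n p
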